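/- arXiv:2407.20625 — 8 statements merged into one kernel-verified Lean document; each statement's English description precedes it below -/
import Mathlib

section
/- For positive parameters k1, k2, q, c, every complex root z of the characteristic polynomial z² + (2√(c·q) + k1 + k2)·z + 2·k2·√(c·q) of the Jacobian matrix J* = [[−k1 − 2√(c·q), k2], [k1, −k2]] has negative real part; hence the positive equilibrium P_e of the MOMOS model is linearly stable in the absence of diffusion and chemotaxis. -/
/-- For positive parameters `k1, k2, q, c`, every complex root `z` of the characteristic
polynomial `z² + (2√(c*q) + k1 + k2)z + 2*k2*√(c*q)` of the Jacobian `J*` has negative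
real part; hence the positive equilibrium of the MOMOS model is linearly stable in the
absence of diffusion and chemotaxis. -/
theorem momos_linear_stability_no_diffusion (k1 k2 q c : ℝ)
    (hk1 : 0 < k1) (hk2 : 0 < k2) (hq : 0 < q) (hc : 0 < c) :
    ∀ z : ℂ,
      z ^ 2 + ((2 * Real.sqrt (c * q) + k1 + k2 : ℝ) : ℂ) * z
        + ((2 * k2 * Real.sqrt (c * q) : ℝ) : ℂ) = 0 →
      z.re < 0 := by
  intro z hz
  have hs : 0 < Real.sqrt (c * q) := Real.sqrt_pos.mpr (mul_pos hc hq)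
  set s := Real.sqrt (c * q) with hsdef
  have hre : z.re ^ 2 - z.im ^ 2 + (2 * s + k1 + k2) * z.re + 2 * k2 * s = 0 := by
    have := congrArg Complex.re hz
    simpa [Complex.add_re, Complex.mul_re, pow_two, Complex.mul_im] using this
  have him : (2 * z.re + (2 * s + k1 + k2)) * z.im = 0 := by
    have := congrArg Complex.im hz
    simp [Complex.add_im, Complex.mul_im, pow_two, Complex.mul_re] at this
    ring_nf
    ring_nf at this
    linarith
  by_contra h
  push_neg at h
  have him2 : z.im = 0 := by
    rcases mul_eq_zero.mp him with h1 | h1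
    · nlinarith
    · exact h1
  rw [him2] at hre
  nlinarith
end

section
/- For positive parameters D_u, D_v, β, k1, k2, q, c, the two conditions B0 < 0 and B0² − 4·A0·C0 > 0 hold simultaneously if and only if β > β*, where A0 = D_u·D_v, B0 = D_u·k2 + D_v·(2√(c·q) + k1) − β·√(c/q)·k1, C0 = 2·k2·√(c·q), and β* = (√q/(k1·√c))·(D_u·k2 + D_v·k1 + 2·D_v·√(c·q) + √(8·D_u·D_v·k2·√(c·q))). -/
/-- For positive parameters `D_u, D_v, β, k1, k2, q, c`, the two conditions `B0 < 0` and
`B0² - 4*A0*C0 > 0` hold simultaneously iff `β > β*`. -/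
theorem momos_instability_conditions_iff (Du Dv β k1 k2 q c : ℝ)
    (hDu : 0 < Du) (hDv : 0 < Dv) (hβ : 0 < β) (hk1 : 0 < k1) (hk2 : 0 < k2)
    (hq : 0 < q) (hc : 0 < c) :
    (Du * k2 + Dv * (2 * Real.sqrt (c * q) + k1) - β * Real.sqrt (c / q) * k1 < 0 ∧
     (Du * k2 + Dv * (2 * Real.sqrt (c * q) + k1) - β * Real.sqrt (c / q) * k1) ^ 2
       - 4 * (Du * Dv) * (2 * k2 * Real.sqrt (c * q)) > 0) ↔
    β > (Real.sqrt q / (k1 * Real.sqrt c)) *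
      (Du * k2 + Dv * k1 + 2 * Dv * Real.sqrt (c * q)
        + Real.sqrt (8 * Du * Dv * k2 * Real.sqrt (c * q))) := by
  have hsq : (0:ℝ) < Real.sqrt q := Real.sqrt_pos.2 hq
  have hsc : (0:ℝ) < Real.sqrt c := Real.sqrt_pos.2 hc
  have hscq : (0:ℝ) < Real.sqrt (c * q) := Real.sqrt_pos.2 (by positivity)
  have hw : Real.sqrt (c / q) = Real.sqrt c / Real.sqrt q := Real.sqrt_div hc.le q
  set s : ℝ := Real.sqrt (c * q) with hs
  set R : ℝ := 8 * Du * Dv * k2 * s with hRdef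
  have hR : (0:ℝ) ≤ R := by positivity
  have hsqrtR : Real.sqrt R ^ 2 = R := Real.sq_sqrt hR
  have hRnn : (0:ℝ) ≤ Real.sqrt R := Real.sqrt_nonneg _
  set M : ℝ := Du * k2 + Dv * k1 + 2 * Dv * s with hM
  set T : ℝ := β * Real.sqrt (c / q) * k1 with hT
  have hTpos : 0 < Real.sqrt (c / q) * k1 := by
    rw [hw]; positivity
  have hrhs : (Real.sqrt q / (k1 * Real.sqrt c)) * (M + Real.sqrt R)
      = (M + Real.sqrt R) / (Real.sqrt (c / q) * k1) := by
    rw [hw]; field_simp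
  constructor
  · rintro ⟨h1, h2⟩
    have hB : Du * k2 + Dv * (2 * s + k1) = M := by rw [hM]; ring
    rw [hB] at h1 h2
    have hTM : 0 < T - M := by linarith
    have h2' : R < (T - M)^2 := by nlinarith
    have hlt : Real.sqrt R < T - M := by
      have := Real.sqrt_lt_sqrt hR h2'
      rwa [Real.sqrt_sq hTM.le] at this
    rw [gt_iff_lt, hrhs, div_lt_iff₀ hTpos]
    calc (M + Real.sqrt R) < T := by linarith
      _ = β * (Real.sqrt (c / q) * k1) := by rw [hT]; ring
  · intro h
    rw [gt_iff_lt, hrhs, div_lt_iff₀ hTpos] at h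
    have hTM : M + Real.sqrt R < T := by
      rw [hT]; nlinarith
    have h1 : T - M > Real.sqrt R := by linarith
    constructor
    · have := hRnn
      have hB : Du * k2 + Dv * (2 * s + k1) = M := by rw [hM]; ring
      rw [hB]; linarith
    · have hB : Du * k2 + Dv * (2 * s + k1) = M := by rw [hM]; ring
      rw [hB]
      have h2 : R < (T - M)^2 := by nlinarith
      nlinarith
end

section
/- For positive parameters D_u, D_v, β, k1, k2, q, c, if β > β* (with β* = (√q/(k1·√c))·(D_u·k2 + D_v·k1 + 2·D_v·√(c·q) + √(8·D_u·D_v·k2·√(c·q)))), then there exists λ > 0 such that Q0(λ) = A0·λ² + B0·λ + C0 < 0, where A0 = D_u·D_v, B0 = D_u·k2 + D_v·(2√(c·q) + k1) − β·√(c/q)·k1, and C0 = 2·k2·√(c·q). -/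
/-!
Multiplying `β > β*` by `√(c/q) k1 > 0` turns it into `B0 < -√(4 A0 C0)`. Hence `B0 < 0` and
`B0² > 4 A0 C0`, so at the vertex `λ = -B0 / (2 A0) > 0` the polynomial takes the value
`C0 - B0² / (4 A0) < 0`.
-/

open Real

theorem exists_pos_quadratic_neg_of_lt_neg_sqrt {a b c : ℝ} (ha : 0 < a)
    (hb : b < -√(4 * a * c)) : ∃ x : ℝ, 0 < x ∧ a * x ^ 2 + b * x + c < 0 := by
  have hb_neg : b < 0 := hb.trans_le (neg_nonpos.2 (sqrt_nonneg _))
  have hdisc : 4 * a * c < b ^ 2 := by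
    rw [← neg_sq]
    exact (sqrt_lt' (neg_pos.2 hb_neg)).1 (lt_neg_of_lt_neg hb)
  refine ⟨-b / (2 * a), div_pos (neg_pos.2 hb_neg) (by positivity), ?_⟩
  have hvertex :
      a * (-b / (2 * a)) ^ 2 + b * (-b / (2 * a)) + c = (4 * a * c - b ^ 2) / (4 * a) := by
    field_simp
    ring
  rw [hvertex]
  exact div_neg_of_neg_of_pos (by linarith) (by positivity)

theorem sqrt_div_mul_sqrt_div_mul {c q k : ℝ} (hc : 0 < c) (hq : 0 < q) (hk : k ≠ 0) :
    √q / (k * √c) * (√(c / q) * k) = 1 := by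
  have hsc : √c ≠ 0 := (sqrt_pos.2 hc).ne'
  have hsq : √q ≠ 0 := (sqrt_pos.2 hq).ne'
  rw [sqrt_div hc.le]
  field_simp

theorem momos_Q0_neg_of_beta_gt_general (Du Dv β k1 k2 q c : ℝ)
    (hDu : 0 < Du) (hDv : 0 < Dv) (hk1 : 0 < k1)
    (hq : 0 < q) (hc : 0 < c)
    (hbeta : β > (Real.sqrt q / (k1 * Real.sqrt c)) *
      (Du * k2 + Dv * k1 + 2 * Dv * Real.sqrt (c * q)
        + Real.sqrt (8 * Du * Dv * k2 * Real.sqrt (c * q)))) :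
    ∃ lam : ℝ, 0 < lam ∧
      (Du * Dv) * lam ^ 2
        + (Du * k2 + Dv * (2 * Real.sqrt (c * q) + k1) - β * Real.sqrt (c / q) * k1) * lam
        + 2 * k2 * Real.sqrt (c * q) < 0 := by
  apply exists_pos_quadratic_neg_of_lt_neg_sqrt (by positivity)
  set X := Du * k2 + Dv * k1 + 2 * Dv * √(c * q) + √(8 * Du * Dv * k2 * √(c * q))
  have hscaled : X < β * (√(c / q) * k1) :=
    calc X = √q / (k1 * √c) * X * (√(c / q) * k1) := by
          rw [mul_right_comm, sqrt_div_mul_sqrt_div_mul hc hq hk1.ne', one_mul]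
      _ < β * (√(c / q) * k1) :=
          mul_lt_mul_of_pos_right hbeta (mul_pos (sqrt_pos.2 (div_pos hc hq)) hk1)
  rw [show 4 * (Du * Dv) * (2 * k2 * √(c * q)) = 8 * Du * Dv * k2 * √(c * q) by ring]
  linarith

/-- For positive parameters, if `β > β*` then there exists `λ > 0` such that
`Q0(λ) = A0*λ² + B0*λ + C0 < 0`. -/
theorem momos_Q0_neg_of_beta_gt (Du Dv β k1 k2 q c : ℝ)
    (hDu : 0 < Du) (hDv : 0 < Dv) (hβ : 0 < β) (hk1 : 0 < k1) (hk2 : 0 < k2)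
    (hq : 0 < q) (hc : 0 < c)
    (hbeta : β > (Real.sqrt q / (k1 * Real.sqrt c)) *
      (Du * k2 + Dv * k1 + 2 * Dv * Real.sqrt (c * q)
        + Real.sqrt (8 * Du * Dv * k2 * Real.sqrt (c * q)))) :
    ∃ lam : ℝ, 0 < lam ∧
      (Du * Dv) * lam ^ 2
        + (Du * k2 + Dv * (2 * Real.sqrt (c * q) + k1) - β * Real.sqrt (c / q) * k1) * lam
        + 2 * k2 * Real.sqrt (c * q) < 0 :=
  momos_Q0_neg_of_beta_gt_general Du Dv β k1 k2 q c hDu hDv hk1 hq hc hbeta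
end

section
/- For positive parameters D_u, D_v, β, k1, k2, q, c, if 0 < β ≤ β* (with β* = (√q/(k1·√c))·(D_u·k2 + D_v·k1 + 2·D_v·√(c·q) + √(8·D_u·D_v·k2·√(c·q)))), then Q0(λ) = A0·λ² + B0·λ + C0 ≥ 0 for every λ ≥ 0, where A0 = D_u·D_v, B0 = D_u·k2 + D_v·(2√(c·q) + k1) − β·√(c/q)·k1, and C0 = 2·k2·√(c·q); hence no chemotaxis-driven instability occurs for β at or below the critical threshold. -/
/-- For positive parameters, if `0 < β ≤ β*` then `Q0(λ) ≥ 0` for every `λ ≥ 0`; hence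
no chemotaxis-driven instability occurs at or below the critical threshold. -/
theorem momos_Q0_nonneg_of_beta_le (Du Dv β k1 k2 q c : ℝ)
    (hDu : 0 < Du) (hDv : 0 < Dv) (hβ : 0 < β) (hk1 : 0 < k1) (hk2 : 0 < k2)
    (hq : 0 < q) (hc : 0 < c)
    (hbeta : β ≤ (Real.sqrt q / (k1 * Real.sqrt c)) *
      (Du * k2 + Dv * k1 + 2 * Dv * Real.sqrt (c * q)
        + Real.sqrt (8 * Du * Dv * k2 * Real.sqrt (c * q)))) :
    ∀ lam : ℝ, 0 ≤ lam →
      0 ≤ (Du * Dv) * lam ^ 2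
        + (Du * k2 + Dv * (2 * Real.sqrt (c * q) + k1) - β * Real.sqrt (c / q) * k1) * lam
        + 2 * k2 * Real.sqrt (c * q) := by
  intro lam hlam
  have hcq : (0:ℝ) < c * q := mul_pos hc hq
  set s := Real.sqrt (c * q) with hs
  have hs0 : 0 < s := Real.sqrt_pos.2 hcq
  have hsc : 0 < Real.sqrt c := Real.sqrt_pos.2 hc
  have hsq : 0 < Real.sqrt q := Real.sqrt_pos.2 hq
  have hdiv : Real.sqrt (c / q) = Real.sqrt c / Real.sqrt q := Real.sqrt_div hc.le q
  set X := Du * k2 + Dv * k1 + 2 * Dv * s + Real.sqrt (8 * Du * Dv * k2 * s) with hX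
  have hkey : β * Real.sqrt (c / q) * k1 ≤ X := by
    rw [hdiv]
    have hfac : 0 ≤ Real.sqrt c / Real.sqrt q * k1 := by positivity
    have h := mul_le_mul_of_nonneg_right hbeta hfac
    calc β * (Real.sqrt c / Real.sqrt q) * k1
        = β * (Real.sqrt c / Real.sqrt q * k1) := by ring
      _ ≤ (Real.sqrt q / (k1 * Real.sqrt c)) * X * (Real.sqrt c / Real.sqrt q * k1) := h
      _ = X := by field_simp
  set r := Real.sqrt (8 * Du * Dv * k2 * s) with hr
  have hr0 : 0 ≤ r := Real.sqrt_nonneg _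
  have hr2 : r ^ 2 = 8 * Du * Dv * k2 * s := Real.sq_sqrt (by positivity)
  have hB : Du * k2 + Dv * (2 * s + k1) - β * Real.sqrt (c / q) * k1 ≥ -r := by
    have : β * Real.sqrt (c / q) * k1 ≤ Du * k2 + Dv * k1 + 2 * Dv * s + r := hkey
    linarith
  nlinarith [sq_nonneg (2 * (Du * Dv) * lam - r), mul_nonneg (mul_nonneg hDu.le hDv.le) hlam,
    mul_le_mul_of_nonneg_right (neg_le_iff_add_nonneg.mp hB) hlam, sq_nonneg lam,
    mul_pos hDu hDv, hlam, hs0.le, hr0]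
end

section
/- (Theorem 1, linearized form.) For positive parameters D_u, D_v, β, k1, k2, q, c, if β > β* (with β* = (√q/(k1·√c))·(D_u·k2 + D_v·k1 + 2·D_v·√(c·q) + √(8·D_u·D_v·k2·√(c·q)))), then there exists λ > 0 such that the matrix H(λ) = [[−D_u·λ − 2√(c·q) − k1, β·√(c/q)·λ + k2], [k1, −D_v·λ − k2]] has strictly negative determinant, and consequently H(λ) has a real eigenvalue μ > 0 (i.e. det(H(λ) − μ·I) = 0 for some real μ > 0); hence the homogeneous equilibrium P_e undergoes chemotaxis-driven instability. -/
/-- If a 2×2 real matrix (given by entries) has negative determinant, it has a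
positive real eigenvalue. -/
lemma quad_pos_root (a b c d : ℝ) (h : a * d - b * c < 0) :
    ∃ μ : ℝ, 0 < μ ∧ (a - μ) * (d - μ) - b * c = 0 := by
  have hdisc : 0 ≤ (a + d) ^ 2 - 4 * (a * d - b * c) := by
    nlinarith [sq_nonneg (a + d)]
  set W := Real.sqrt ((a + d) ^ 2 - 4 * (a * d - b * c)) with hW
  have hW2 : W ^ 2 = (a + d) ^ 2 - 4 * (a * d - b * c) := Real.sq_sqrt hdisc
  have hWgt : |a + d| < W := by
    have h1 : (a + d) ^ 2 < (a + d) ^ 2 - 4 * (a * d - b * c) := by linarith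
    have := Real.sqrt_lt_sqrt (sq_nonneg (a + d)) h1
    rwa [Real.sqrt_sq_eq_abs] at this
  have habs : -(a + d) ≤ |a + d| := neg_le_abs (a + d)
  refine ⟨(a + d + W) / 2, by linarith, ?_⟩
  linear_combination hW2 / 4

/-- (Theorem 1, linearized form.) For positive parameters, if `β > β*` then there exists
`λ > 0` such that the matrix `H(λ)` has strictly negative determinant, and consequently
`H(λ)` has a real eigenvalue `μ > 0`; hence the homogeneous equilibrium undergoes
chemotaxis-driven instability. -/
theorem momos_chemotaxis_driven_instability (Du Dv β k1 k2 q c : ℝ)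
    (hDu : 0 < Du) (hDv : 0 < Dv) (hβ : 0 < β) (hk1 : 0 < k1) (hk2 : 0 < k2)
    (hq : 0 < q) (hc : 0 < c)
    (hbeta : β > (Real.sqrt q / (k1 * Real.sqrt c)) *
      (Du * k2 + Dv * k1 + 2 * Dv * Real.sqrt (c * q)
        + Real.sqrt (8 * Du * Dv * k2 * Real.sqrt (c * q)))) :
    ∃ lam : ℝ, 0 < lam ∧
      (Matrix.of
        ![![-Du * lam - 2 * Real.sqrt (c * q) - k1, β * Real.sqrt (c / q) * lam + k2],
          ![k1, -Dv * lam - k2]]).det < 0 ∧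
      ∃ μ : ℝ, 0 < μ ∧
        ((Matrix.of
          ![![-Du * lam - 2 * Real.sqrt (c * q) - k1, β * Real.sqrt (c / q) * lam + k2],
            ![k1, -Dv * lam - k2]])
          - μ • (1 : Matrix (Fin 2) (Fin 2) ℝ)).det = 0 := by
  set s := Real.sqrt (c * q) with hs_def
  set r := Real.sqrt (c / q) with hr_def
  set R := Real.sqrt (8 * Du * Dv * k2 * s) with hR_def
  have hs : 0 < s := Real.sqrt_pos.2 (mul_pos hc hq)
  have hr : 0 < r := Real.sqrt_pos.2 (div_pos hc hq)
  have hR : 0 ≤ R := Real.sqrt_nonneg _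
  have hR2 : R ^ 2 = 8 * Du * Dv * k2 * s := Real.sq_sqrt (by positivity)
  have hsc : 0 < Real.sqrt c := Real.sqrt_pos.2 hc
  have hsq : 0 < Real.sqrt q := Real.sqrt_pos.2 hq
  have hrsq : r * Real.sqrt q = Real.sqrt c := by
    rw [hr_def, Real.sqrt_div hc.le, div_mul_cancel₀ _ (ne_of_gt hsq)]
  set S := Du * k2 + Dv * k1 + 2 * Dv * s with hS_def
  -- From `hbeta` deduce `k1 * β * r > S + R`.
  have hbeta' : Real.sqrt q * (S + R) < β * (k1 * Real.sqrt c) := by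
    rw [gt_iff_lt, div_mul_eq_mul_div, div_lt_iff₀ (by positivity)] at hbeta
    linarith
  have hBR : S + R < k1 * β * r := by
    have h1 : Real.sqrt q * (S + R) < Real.sqrt q * (k1 * β * r) := by
      calc Real.sqrt q * (S + R) < β * (k1 * Real.sqrt c) := hbeta'
        _ = β * (k1 * (r * Real.sqrt q)) := by rw [hrsq]
        _ = Real.sqrt q * (k1 * β * r) := by ring
    exact lt_of_mul_lt_mul_left h1 hsq.le
  set B := k1 * β * r - S with hB_def
  have hBgtR : R < B := by linarith
  have hB0 : 0 < B := lt_of_le_of_lt hR hBgtR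
  have hB2 : 8 * Du * Dv * k2 * s < B ^ 2 := by nlinarith
  refine ⟨B / (2 * Du * Dv), by positivity, ?_⟩
  set lam := B / (2 * Du * Dv) with hlam_def
  have hdet : (-Du * lam - 2 * s - k1) * (-Dv * lam - k2) - (β * r * lam + k2) * k1
      = 2 * k2 * s - B ^ 2 / (4 * Du * Dv) := by
    rw [hlam_def, hB_def, hS_def]
    field_simp
    ring
  have hdetneg : (-Du * lam - 2 * s - k1) * (-Dv * lam - k2) - (β * r * lam + k2) * k1 < 0 := by
    rw [hdet, sub_neg, lt_div_iff₀ (by positivity)]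
    nlinarith
  constructor
  · rw [Matrix.det_fin_two_of]; exact hdetneg
  · obtain ⟨μ, hμ, heq⟩ := quad_pos_root _ _ _ _ hdetneg
    refine ⟨μ, hμ, ?_⟩
    rw [Matrix.det_fin_two]
    simp only [Matrix.sub_apply, Matrix.smul_apply, Matrix.one_apply, Matrix.of_apply,
      Matrix.cons_val', Matrix.cons_val_zero, Matrix.cons_val_one, Matrix.head_cons,
      Matrix.empty_val', Matrix.cons_val_fin_one, Matrix.head_fin_const]
    norm_num
    linarith [heq]
end

section
/- For positive parameters D_u, D_v, k1, k2, q, c and β = 0 (no chemotaxis), for every λ ≥ 0 every complex root μ of the characteristic polynomial μ² + Q1(λ)·μ + Q0(λ) of the matrix H(λ) = [[−D_u·λ − 2√(c·q) − k1, k2], [k1, −D_v·λ − k2]] has negative real part, where Q1(λ) = (D_u + D_v)·λ + 2√(c·q) + k1 + k2 and Q0(λ) = D_u·D_v·λ² + (D_u·k2 + D_v·(2√(c·q) + k1))·λ + 2·k2·√(c·q); hence no diffusion-driven (Turing) instability of P_e can occur in the MOMOS model without chemotaxis. -/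
/-- A complex root of `μ² + bμ + c` with real `b, c > 0` has negative real part. -/
lemma quadratic_root_re_neg (b c : ℝ) (hb : 0 < b) (hc : 0 < c) (μ : ℂ)
    (h : μ ^ 2 + (b : ℂ) * μ + (c : ℂ) = 0) : μ.re < 0 := by
  have hre : μ.re ^ 2 - μ.im ^ 2 + b * μ.re + c = 0 := by
    have := congrArg Complex.re h
    simpa [Complex.add_re, Complex.mul_re, pow_two, Complex.mul_im] using this
  have him : μ.im * (2 * μ.re + b) = 0 := by
    have := congrArg Complex.im h
    simp [Complex.add_im, Complex.mul_im, pow_two, Complex.mul_re] at this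
    nlinarith [this]
  rcases mul_eq_zero.mp him with h0 | h0
  · -- imaginary part zero: x² + bx + c = 0 with x = μ.re
    nlinarith [sq_nonneg μ.re, sq_nonneg (μ.re + b)]
  · linarith
/-- For positive parameters and no chemotaxis (`β = 0`), for every `λ ≥ 0` every complex
root `μ` of the characteristic polynomial `μ² + Q1(λ)μ + Q0(λ)` of `H(λ)` has negative
real part; hence no diffusion-driven (Turing) instability can occur in the MOMOS model
without chemotaxis. -/
theorem momos_no_turing_instability_without_chemotaxis (Du Dv k1 k2 q c : ℝ)
    (hDu : 0 < Du) (hDv : 0 < Dv) (hk1 : 0 < k1) (hk2 : 0 < k2)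
    (hq : 0 < q) (hc : 0 < c) :
    ∀ lam : ℝ, 0 ≤ lam → ∀ μ : ℂ,
      μ ^ 2 + (((Du + Dv) * lam + 2 * Real.sqrt (c * q) + k1 + k2 : ℝ) : ℂ) * μ
        + ((Du * Dv * lam ^ 2 + (Du * k2 + Dv * (2 * Real.sqrt (c * q) + k1)) * lam
            + 2 * k2 * Real.sqrt (c * q) : ℝ) : ℂ) = 0 →
      μ.re < 0 := by
  intro lam hlam μ hμ
  have hs : 0 < Real.sqrt (c * q) := Real.sqrt_pos.mpr (by positivity)
  apply quadratic_root_re_neg _ _ _ _ μ hμ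
  · positivity
  · positivity
end

section
/- For positive parameters D_u, D_v, β, k1, k2, q, if β > β_c (with β_c = (D_u·k2 + D_v·q + 2·√(D_u·D_v·q·k2))/k1), then there exists λ > 0 such that Q0(λ) = D_u·D_v·λ² + (D_u·k2 + D_v·q − β·k1)·λ + q·k2 < 0; consequently the matrix H(λ) = [[−D_u·λ − q, β·λ], [k1, −D_v·λ − k2]] has negative determinant and hence a real eigenvalue μ > 0, so the equilibrium P* undergoes chemotaxis-driven instability. -/
/-- For positive parameters, if `β > β_c` then there exists `λ > 0` with `Q0(λ) < 0`;
consequently the matrix `H(λ)` has negative determinant and hence a real eigenvalue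
`μ > 0`, so the equilibrium `P*` undergoes chemotaxis-driven instability. -/
theorem mimura_chemotaxis_driven_instability (Du Dv β k1 k2 q : ℝ)
    (hDu : 0 < Du) (hDv : 0 < Dv) (hβ : 0 < β) (hk1 : 0 < k1) (hk2 : 0 < k2)
    (hq : 0 < q)
    (hbeta : β > (Du * k2 + Dv * q + 2 * Real.sqrt (Du * Dv * q * k2)) / k1) :
    ∃ lam : ℝ, 0 < lam ∧
      Du * Dv * lam ^ 2 + (Du * k2 + Dv * q - β * k1) * lam + q * k2 < 0 ∧
      (Matrix.of ![![-Du * lam - q, β * lam], ![k1, -Dv * lam - k2]]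
        : Matrix (Fin 2) (Fin 2) ℝ).det < 0 ∧
      ∃ μ : ℝ, 0 < μ ∧
        ((Matrix.of ![![-Du * lam - q, β * lam], ![k1, -Dv * lam - k2]]
          : Matrix (Fin 2) (Fin 2) ℝ) - μ • (1 : Matrix (Fin 2) (Fin 2) ℝ)).det = 0 := by
  set lam : ℝ := Real.sqrt (q * k2 / (Du * Dv)) with hlam
  have hDuDv : 0 < Du * Dv := mul_pos hDu hDv
  have hqk2 : 0 < q * k2 := mul_pos hq hk2
  have hlampos : 0 < lam := Real.sqrt_pos.mpr (div_pos hqk2 hDuDv)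
  have hlamsq : Du * Dv * lam ^ 2 = q * k2 := by
    rw [hlam, Real.sq_sqrt (le_of_lt (div_pos hqk2 hDuDv))]
    field_simp
  -- √(Du*Dv*q*k2) = √(Du*Dv) * √(q*k2), and lam = √(q*k2)/√(Du*Dv)
  have hs : Real.sqrt (Du * Dv * q * k2) * lam = q * k2 := by
    rw [hlam, ← Real.sqrt_mul (by positivity)]
    rw [show Du * Dv * q * k2 * (q * k2 / (Du * Dv)) = (q * k2) ^ 2 by
      field_simp]
    exact Real.sqrt_sq (le_of_lt hqk2)
  have hβk1 : β * k1 > Du * k2 + Dv * q + 2 * Real.sqrt (Du * Dv * q * k2) := by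
    have := (div_lt_iff₀ hk1).mp hbeta
    linarith
  have hQ0 : Du * Dv * lam ^ 2 + (Du * k2 + Dv * q - β * k1) * lam + q * k2 < 0 := by
    have h1 : (Du * k2 + Dv * q - β * k1) * lam <
        -(2 * Real.sqrt (Du * Dv * q * k2)) * lam := by
      apply mul_lt_mul_of_pos_right _ hlampos
      linarith
    have h2 : -(2 * Real.sqrt (Du * Dv * q * k2)) * lam = -(2 * (q * k2)) := by
      rw [neg_mul, mul_assoc, hs]
    nlinarith
  have hdet : (Matrix.of ![![-Du * lam - q, β * lam], ![k1, -Dv * lam - k2]]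
      : Matrix (Fin 2) (Fin 2) ℝ).det =
      Du * Dv * lam ^ 2 + (Du * k2 + Dv * q - β * k1) * lam + q * k2 := by
    rw [Matrix.det_fin_two]
    simp [Matrix.of_apply]
    ring
  refine ⟨lam, hlampos, hQ0, by rw [hdet]; exact hQ0, ?_⟩
  -- eigenvalue
  set t : ℝ := (-Du * lam - q) + (-Dv * lam - k2) with ht
  set d : ℝ := Du * Dv * lam ^ 2 + (Du * k2 + Dv * q - β * k1) * lam + q * k2 with hd
  have hdisc : 0 < t ^ 2 - 4 * d := by nlinarith [sq_nonneg t]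
  set s : ℝ := Real.sqrt (t ^ 2 - 4 * d) with hsdef
  have hssq : s ^ 2 = t ^ 2 - 4 * d := Real.sq_sqrt (le_of_lt hdisc)
  have hs_gt : s > -t := by
    have h1 : (-t) ≤ Real.sqrt (t ^ 2) := by
      rw [Real.sqrt_sq_eq_abs]; exact neg_le_abs t
    have h2 : Real.sqrt (t ^ 2) < s := by
      apply Real.sqrt_lt_sqrt (sq_nonneg t)
      linarith [hQ0]
    linarith
  refine ⟨(t + s) / 2, by linarith, ?_⟩
  rw [Matrix.det_fin_two]
  simp [Matrix.of_apply, Matrix.one_apply]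
  linear_combination hssq / 4 + ((t + s) / 2) * ht + hd
end

section
/- For positive parameters D_u, D_v, β, k1, k2, q, if 0 < β ≤ β_c (with β_c = (D_u·k2 + D_v·q + 2·√(D_u·D_v·q·k2))/k1), then Q0(λ) = D_u·D_v·λ² + (D_u·k2 + D_v·q − β·k1)·λ + q·k2 ≥ 0 for every λ ≥ 0; hence no chemotaxis-driven instability of P* occurs for β at or below the critical threshold. -/
/-- For positive parameters, if `0 < β ≤ β_c` then `Q0(λ) ≥ 0` for every `λ ≥ 0`; hence
no chemotaxis-driven instability of `P*` occurs at or below the critical threshold. -/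
theorem mimura_Q0_nonneg_of_beta_le (Du Dv β k1 k2 q : ℝ)
    (hDu : 0 < Du) (hDv : 0 < Dv) (hβ : 0 < β) (hk1 : 0 < k1) (hk2 : 0 < k2)
    (hq : 0 < q)
    (hbeta : β ≤ (Du * k2 + Dv * q + 2 * Real.sqrt (Du * Dv * q * k2)) / k1) :
    ∀ lam : ℝ, 0 ≤ lam →
      0 ≤ Du * Dv * lam ^ 2 + (Du * k2 + Dv * q - β * k1) * lam + q * k2 := by
  intro lam hlam
  have hβk1 : β * k1 ≤ Du * k2 + Dv * q + 2 * Real.sqrt (Du * Dv * q * k2) :=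
    (le_div_iff₀ hk1).mp hbeta
  have ha : Real.sqrt (Du * Dv) ^ 2 = Du * Dv :=
    Real.sq_sqrt (by positivity)
  have hb : Real.sqrt (q * k2) ^ 2 = q * k2 :=
    Real.sq_sqrt (by positivity)
  have hc : Real.sqrt (Du * Dv) * Real.sqrt (q * k2) = Real.sqrt (Du * Dv * q * k2) := by
    rw [← Real.sqrt_mul (by positivity)]; ring_nf
  nlinarith [sq_nonneg (Real.sqrt (Du * Dv) * lam - Real.sqrt (q * k2)),
    mul_nonneg hlam (Real.sqrt_nonneg (Du * Dv * q * k2)),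
    mul_nonneg hlam hlam]
end
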